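/- Let T be a phylogenetic tree and let G be its distance graph, with laminar family F, subgraph g consisting of all edges of G lying in at least one MST, and J_v the set of neighbors of v in g. For a labeled vertex v, let S_v be a subcollection of F of minimum cardinality among all subcollections S ⊆ F satisfying J_v ⊆ ⋃S and v ∉ ⋃S. Then the maximum degree of v over all MSTs of G satisfies δ_max(v) = |S_v|. -/

import Mathlib

open SimpleGraph

/-- The threshold subgraph `G_{≤ t}`: same vertices, only edges of weight `≤ t`. -/
def thresholdGraph {V : Type*} (G : SimpleGraph V) (w : Sym2 V → ℝ) (t : ℝ) :
    SimpleGraph V where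
  Adj u v := G.Adj u v ∧ w s(u, v) ≤ t
  symm := by
    constructor
    intro u v hv
    exact ⟨hv.1.symm, by rw [Sym2.eq_swap]; exact hv.2⟩
  loopless := ⟨fun v hv => hv.1.ne rfl⟩

/-- The strict threshold subgraph `G_{< t}`. -/
def strictThresholdGraph {V : Type*} (G : SimpleGraph V) (w : Sym2 V → ℝ) (t : ℝ) :
    SimpleGraph V where
  Adj u v := G.Adj u v ∧ w s(u, v) < t
  symm := by
    constructor
    intro u v hv
    exact ⟨hv.1.symm, by rw [Sym2.eq_swap]; exact hv.2⟩
  loopless := ⟨fun v hv => hv.1.ne rfl⟩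

/-- The laminar family of an edge-weighted graph: the whole vertex set together with the
vertex sets of the connected components of every threshold subgraph. -/
def laminarFamily {V : Type*} (G : SimpleGraph V) (w : Sym2 V → ℝ) : Set (Set V) :=
  insert Set.univ
    {S | ∃ (t : ℝ) (C : (thresholdGraph G w t).ConnectedComponent), S = C.supp}

/-- `M` is a spanning tree of `G`. -/
def IsSpanningTree {V : Type*} (G M : SimpleGraph V) : Prop :=
  M ≤ G ∧ M.IsTree

/-- Total weight of (the edges of) a graph. -/
noncomputable def totalWeight {V : Type*} [Finite V] (M : SimpleGraph V)
    (w : Sym2 V → ℝ) : ℝ :=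
  ∑ e ∈ M.edgeSet.toFinite.toFinset, w e

/-- `M` is a minimum spanning tree of `G` with respect to the weights `w`. -/
def IsMST {V : Type*} [Finite V] (G : SimpleGraph V) (w : Sym2 V → ℝ)
    (M : SimpleGraph V) : Prop :=
  IsSpanningTree G M ∧ ∀ M' : SimpleGraph V, IsSpanningTree G M' →
    totalWeight M w ≤ totalWeight M' w

/-- A phylogenetic tree: a finite tree with strictly positive edge lengths and a nonempty
set `L` of labeled vertices, each hidden vertex having degree at least 3. -/
structure PhyloTree (V : Type*) where
  finV : Finite V
  T : SimpleGraph V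
  isTree : T.IsTree
  len : Sym2 V → ℝ
  len_pos : ∀ e ∈ T.edgeSet, 0 < len e
  L : Set V
  L_nonempty : L.Nonempty
  hidden_deg : ∀ v, v ∉ L → 3 ≤ (T.neighborSet v).ncard

namespace PhyloTree

variable {V : Type*}

/-- The unique path between two vertices of the tree. -/
noncomputable def path (P : PhyloTree V) (u v : V) : P.T.Walk u v :=
  (P.isTree.existsUnique_path u v).exists.choose

lemma path_isPath (P : PhyloTree V) (u v : V) : (P.path u v).IsPath :=
  (P.isTree.existsUnique_path u v).exists.choose_spec

/-- The tree distance: the sum of the edge lengths along the unique path. -/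
noncomputable def dist (P : PhyloTree V) (u v : V) : ℝ :=
  ((P.path u v).edges.map P.len).sum

lemma dist_comm (P : PhyloTree V) (u v : V) : P.dist u v = P.dist v u := by
  have h : (P.path u v).reverse = P.path v u :=
    (P.isTree.existsUnique_path v u).unique ((P.path_isPath u v).reverse)
      (P.path_isPath v u)
  unfold dist
  rw [← h, SimpleGraph.Walk.edges_reverse, List.map_reverse, List.sum_reverse]

/-- The tree distance as a symmetric function on unordered pairs. -/
noncomputable def wdist (P : PhyloTree V) : Sym2 V → ℝ :=
  Sym2.lift ⟨fun u v => P.dist u v, fun u v => P.dist_comm u v⟩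

/-- The surrogate set of a vertex: the labeled vertices closest to it. -/
def Sg (P : PhyloTree V) (h : V) : Set V :=
  {l | l ∈ P.L ∧ ∀ l' ∈ P.L, P.dist l h ≤ P.dist l' h}

/-- `s` is the surrogate vertex `Sg_R(h)` of `h` w.r.t. the ranking `R`:
the element of the surrogate set of `h` of smallest `R`-value. -/
def IsSgR (P : PhyloTree V) (R : V → ℕ) (h : V) (s : V) : Prop :=
  s ∈ P.Sg h ∧ ∀ l ∈ P.Sg h, R s ≤ R l

/-- The edge weights of the distance graph of `P` (the complete graph on `↥P.L`). -/
noncomputable def wG (P : PhyloTree V) : Sym2 ↥P.L → ℝ :=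
  fun e => P.wdist (e.map Subtype.val)

/-- An edge `e` of the distance graph lying in at least one MST (i.e. an edge of `g`). -/
def mstEdge (P : PhyloTree V) (e : Sym2 ↥P.L) : Prop :=
  haveI := P.finV
  ∃ M : SimpleGraph ↥P.L, IsMST (⊤ : SimpleGraph ↥P.L) P.wG M ∧ e ∈ M.edgeSet

/-- `δ_max(v)`: the maximum degree of `v` over all MSTs of the distance graph. -/
noncomputable def deltaMax (P : PhyloTree V) (v : ↥P.L) : ℕ :=
  haveI := P.finV
  sSup {d : ℕ | ∃ M : SimpleGraph ↥P.L,
    IsMST (⊤ : SimpleGraph ↥P.L) P.wG M ∧ d = (M.neighborSet v).ncard}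

end PhyloTree

/-- The smaller of the two ranks of the endpoints of an edge. -/
def sym2MinR {α : Type*} (R : α → ℕ) : Sym2 α → ℕ :=
  Sym2.lift ⟨fun a b => min (R a) (R b), fun a b => min_comm _ _⟩

/-- The larger of the two ranks of the endpoints of an edge. -/
def sym2MaxR {α : Type*} (R : α → ℕ) : Sym2 α → ℕ :=
  Sym2.lift ⟨fun a b => max (R a) (R b), fun a b => max_comm _ _⟩

/-- The strict total order `<_R` on edges: first by weight, then by the smaller rank of
the endpoints, then by the larger rank of the endpoints. -/
def edgeLT {α : Type*} (w : Sym2 α → ℝ) (R : α → ℕ) (e f : Sym2 α) : Prop :=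
  w e < w f ∨ (w e = w f ∧ (sym2MinR R e < sym2MinR R f ∨
    (sym2MinR R e = sym2MinR R f ∧ sym2MaxR R e < sym2MaxR R f)))

/-- `M` is the vertex-ranked MST of `G` w.r.t. the ranking `R`: a spanning tree such that
every non-tree edge `{u,v}` of `G` is the `<_R`-greatest edge of the cycle it closes,
i.e. every edge of the `M`-path from `u` to `v` is `<_R`-smaller than `{u,v}`. -/
def IsVRMST {α : Type*} (G : SimpleGraph α) (w : Sym2 α → ℝ) (R : α → ℕ)
    (M : SimpleGraph α) : Prop :=
  IsSpanningTree G M ∧ ∀ u v : α, G.Adj u v → ¬M.Adj u v →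
    ∀ p : M.Walk u v, p.IsPath → ∀ f ∈ p.edges, edgeLT w R f s(u, v)

/-!
Everything is an exchange argument on a minimum spanning tree `M` of the complete graph.
Two neighbours `u ≠ u'` of `v` in `M` cannot lie in one component of a threshold graph
`G_{≤t}` avoiding `v`: then `t < w(vu)`, and the path from `u` to `u'` in `G_{≤t}` has an edge
leaving the side of `u` in `M - vu`, which could replace `vu`. So every admissible cover has at
least `deg_M v` members.

Conversely, take `M` of maximal degree at `v` and, for each neighbour `b`, the component `C_b`
of `b` in `G_{<w(vb)}`; weights take finitely many values, so `C_b` is in the laminar family.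
If `vu` lies in some MST but not in `M`, every edge of the `M`-path from `v` to `u` weighs at
most `w(vu)`, and those of weight exactly `w(vu)` contain `v`, since exchanging one of them for
`vu` would give an MST of larger degree at `v`. As `vu` lies in some MST, `u` is not joined to
`v` in `G_{<w(vu)}`, so the first edge `vb` weighs exactly `w(vu)` and `u ∈ C_b`.
-/

namespace SimpleGraph

variable {α : Type*} {M : SimpleGraph α}

lemma IsTree.not_reachable_deleteEdges_of_mem_edges (hM : M.IsTree) {u v : α}
    {p : M.Walk u v} (hp : p.IsPath) {e : Sym2 α} (he : e ∈ p.edges) :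
    ¬(M.deleteEdges {e}).Reachable u v := by
  classical
  rintro ⟨q⟩
  have hq : ∀ f ∈ q.toPath.val.edges, f ∈ M.edgeSet ∧ f ≠ e := fun f hf => by
    simpa using q.toPath.val.edges_subset_edgeSet hf
  have hqp : q.toPath.val.transfer M (fun f hf => (hq f hf).1) = p :=
    (hM.existsUnique_path u v).unique (q.toPath.prop.transfer _) hp
  rw [← hqp, Walk.edges_transfer] at he
  exact (hq e he).2 rfl

lemma Preconnected.reachable_deleteEdges_or (hM : M.Preconnected) (a b z : α) :
    (M.deleteEdges {s(a, b)}).Reachable a z ∨ (M.deleteEdges {s(a, b)}).Reachable b z := by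
  suffices ∀ x y (p : M.Walk x y), (M.deleteEdges {s(a, b)}).Reachable a y ∨
      (M.deleteEdges {s(a, b)}).Reachable b y →
      (M.deleteEdges {s(a, b)}).Reachable a x ∨ (M.deleteEdges {s(a, b)}).Reachable b x from
    (hM z a).elim fun p => this z a p (Or.inl .rfl)
  intro x y p
  induction p with
  | nil => exact id
  | @cons x c y hxc p ih =>
    intro hy
    by_cases hab : s(x, c) = s(a, b)
    · rcases Sym2.eq_iff.mp hab with ⟨rfl, -⟩ | ⟨rfl, -⟩
      exacts [Or.inl .rfl, Or.inr .rfl]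
    · have hxc' : (M.deleteEdges {s(a, b)}).Adj x c := by simpa [hab] using hxc
      exact (ih hy).imp (·.trans hxc'.reachable.symm) (·.trans hxc'.reachable.symm)

lemma IsTree.isTree_deleteEdges_sup_edge (hM : M.IsTree) {a b x y : α}
    (hxy : ¬(M.deleteEdges {s(a, b)}).Reachable x y) :
    (M.deleteEdges {s(a, b)} ⊔ edge x y).IsTree := by
  set N := M.deleteEdges {s(a, b)} ⊔ edge x y
  have hle : M.deleteEdges {s(a, b)} ≤ N := le_sup_left
  have hxyN : N.Reachable x y := Adj.reachable <| Or.inr <| by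
    simpa [edge_adj] using fun h : x = y => hxy (h ▸ .rfl)
  have hsides := hM.connected.preconnected.reachable_deleteEdges_or a b
  have hab : N.Reachable a b := by
    rcases hsides x with hx | hx <;> rcases hsides y with hy | hy
    · exact absurd (hx.symm.trans hy) hxy
    · exact (hx.mono hle).trans (hxyN.trans (hy.mono hle).symm)
    · exact (hy.mono hle).trans (hxyN.symm.trans (hx.mono hle).symm)
    · exact absurd (hx.symm.trans hy) hxy
  have hconn : ∀ z, N.Reachable a z := fun z =>
    (hsides z).elim (·.mono hle) (hab.trans <| ·.mono hle)
  have : Nonempty α := ⟨a⟩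
  refine ⟨Connected.mk fun u v => (hconn u).symm.trans (hconn v), ?_⟩
  exact (hM.isAcyclic.anti (deleteEdges_le _)).sup_edge_of_not_reachable hxy

lemma totalWeight_deleteEdges_sup_edge [Finite α] (w : Sym2 α → ℝ) {a b x y : α}
    (hab : M.Adj a b) (hxy : ¬(M.deleteEdges {s(a, b)}).Reachable x y) :
    totalWeight (M.deleteEdges {s(a, b)} ⊔ edge x y) w =
      totalWeight M w - w s(a, b) + w s(x, y) := by
  classical
  have hne : x ≠ y := fun h => hxy (h ▸ .rfl)
  have hnotin : s(x, y) ∉ M.edgeSet.toFinite.toFinset.erase s(a, b) := fun h =>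
    hxy (Adj.reachable (by simpa [and_comm] using h))
  have hedges : (M.deleteEdges {s(a, b)} ⊔ edge x y).edgeSet.toFinite.toFinset =
      insert s(x, y) (M.edgeSet.toFinite.toFinset.erase s(a, b)) := by
    ext f
    simp [edgeSet_edge_of_ne hne, and_comm]
  rw [totalWeight, totalWeight, hedges, Finset.sum_insert hnotin,
    Finset.sum_erase_eq_sub (by simpa using hab)]
  ring

lemma Walk.reachable_strictThresholdGraph {G : SimpleGraph α} {w : Sym2 α → ℝ} {t : ℝ}
    {u v : α} (p : G.Walk u v) (hp : ∀ f ∈ p.edges, w f < t) :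
    (strictThresholdGraph ⊤ w t).Reachable u v :=
  ⟨p.transfer _ fun f hf => by
    induction f using Sym2.ind with
    | _ a b => exact (⟨(p.adj_of_mem_edges hf).ne, hp _ hf⟩ : _ ∧ _)⟩

lemma exists_thresholdGraph_eq_strictThresholdGraph [Finite α] (G : SimpleGraph α)
    (w : Sym2 α → ℝ) (s : ℝ) : ∃ t, thresholdGraph G w t = strictThresholdGraph G w s := by
  classical
  have := Fintype.ofFinite α
  set B := insert (s - 1) ((Finset.univ.image w).filter (· < s))
  have hBs : B.max' (Finset.insert_nonempty _ _) < s :=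
    (Finset.max'_lt_iff _ _).mpr (by simp [B])
  refine ⟨B.max' (Finset.insert_nonempty _ _), ?_⟩
  ext a b
  exact and_congr_right fun _ =>
    ⟨fun h => h.trans_lt hBs, fun h => B.le_max' _ (by simp [B, h])⟩

lemma connectedComponentMk_strictThresholdGraph_supp_mem_laminarFamily [Finite α]
    (G : SimpleGraph α) (w : Sym2 α → ℝ) (s : ℝ) (u : α) :
    ((strictThresholdGraph G w s).connectedComponentMk u).supp ∈ laminarFamily G w := by
  obtain ⟨t, ht⟩ := exists_thresholdGraph_eq_strictThresholdGraph G w s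
  rw [← ht]
  exact Or.inr ⟨t, _, rfl⟩

lemma exists_isMST [Finite α] [Nonempty α] (w : Sym2 α → ℝ) : ∃ M, IsMST ⊤ w M := by
  obtain ⟨T, hT⟩ := (connected_top (V := α)).exists_isTree_le
  obtain ⟨M, hM, hmin⟩ := Set.exists_min_image {M : SimpleGraph α | IsSpanningTree ⊤ M}
    (totalWeight · w) (Set.toFinite _) ⟨T, hT⟩
  exact ⟨M, hM, hmin⟩

lemma exists_isMST_forall_ncard_neighborSet_le [Finite α] [Nonempty α] (w : Sym2 α → ℝ)
    (v : α) : ∃ M, IsMST ⊤ w M ∧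
      ∀ M', IsMST ⊤ w M' → (M'.neighborSet v).ncard ≤ (M.neighborSet v).ncard :=
  Set.exists_max_image {M | IsMST ⊤ w M} (fun M => (M.neighborSet v).ncard) (Set.toFinite _)
    (exists_isMST w)

section MST

variable [Finite α] {w : Sym2 α → ℝ}

lemma IsMST.weight_le_of_not_reachable_deleteEdges (hM : IsMST ⊤ w M) {a b x y : α}
    (hab : M.Adj a b) (hxy : ¬(M.deleteEdges {s(a, b)}).Reachable x y) :
    w s(a, b) ≤ w s(x, y) := by
  have := hM.2 _ ⟨le_top, hM.1.2.isTree_deleteEdges_sup_edge hxy⟩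
  rw [totalWeight_deleteEdges_sup_edge w hab hxy] at this
  linarith

lemma IsMST.isMST_deleteEdges_sup_edge (hM : IsMST ⊤ w M) {a b x y : α}
    (hab : M.Adj a b) (hxy : ¬(M.deleteEdges {s(a, b)}).Reachable x y)
    (hw : w s(x, y) ≤ w s(a, b)) : IsMST ⊤ w (M.deleteEdges {s(a, b)} ⊔ edge x y) := by
  refine ⟨⟨le_top, hM.1.2.isTree_deleteEdges_sup_edge hxy⟩, fun M' hM' => ?_⟩
  rw [totalWeight_deleteEdges_sup_edge w hab hxy]
  linarith [hM.2 M' hM']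

lemma IsMST.exists_adj_weight_le (hM : IsMST ⊤ w M) {a b u z : α} (hab : M.Adj a b)
    {H : SimpleGraph α} (huz : H.Reachable u z)
    (hz : ¬(M.deleteEdges {s(a, b)}).Reachable u z) :
    ∃ x y, H.Adj x y ∧ w s(a, b) ≤ w s(x, y) := by
  obtain ⟨p⟩ := huz
  obtain ⟨d, -, hd, hd'⟩ :=
    p.exists_boundary_dart {y | (M.deleteEdges {s(a, b)}).Reachable u y} .rfl hz
  exact ⟨d.fst, d.snd, d.adj,
    hM.weight_le_of_not_reachable_deleteEdges hab fun h => hd' (Reachable.trans hd h)⟩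

lemma IsMST.weight_le_of_reachable_thresholdGraph (hM : IsMST ⊤ w M) {v u z : α}
    (hvu : M.Adj v u) {t : ℝ} (huz : (thresholdGraph ⊤ w t).Reachable u z)
    (hz : ¬(M.deleteEdges {s(v, u)}).Reachable u z) : w s(v, u) ≤ t := by
  obtain ⟨x, y, hxy, hle⟩ := hM.exists_adj_weight_le hvu huz hz
  exact hle.trans hxy.2

lemma IsMST.not_reachable_strictThresholdGraph (hM : IsMST ⊤ w M) {v u : α}
    (hvu : M.Adj v u) : ¬(strictThresholdGraph ⊤ w (w s(v, u))).Reachable v u := fun hr => by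
  obtain ⟨x, y, hxy, hle⟩ := hM.exists_adj_weight_le hvu hr
    (isAcyclic_iff_forall_adj_isBridge.mp hM.1.2.isAcyclic hvu)
  exact hle.not_gt hxy.2

lemma IsMST.weight_le_of_mem_edges (hM : IsMST ⊤ w M) {x y : α} {p : M.Walk x y}
    (hp : p.IsPath) {f : Sym2 α} (hf : f ∈ p.edges) : w f ≤ w s(x, y) := by
  induction f using Sym2.ind with
  | _ a b =>
    exact hM.weight_le_of_not_reachable_deleteEdges (p.adj_of_mem_edges hf)
      (hM.1.2.not_reachable_deleteEdges_of_mem_edges hp hf)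

lemma IsMST.eq_of_adj_of_mem_laminarFamily (hM : IsMST ⊤ w M) {v u u' : α}
    (hu : M.Adj v u) (hu' : M.Adj v u') {C : Set α} (hC : C ∈ laminarFamily ⊤ w)
    (hvC : v ∉ C) (huC : u ∈ C) (hu'C : u' ∈ C) : u = u' := by
  obtain rfl | ⟨t, c, rfl⟩ := hC
  · exact absurd (Set.mem_univ v) hvC
  by_contra hne
  rw [ConnectedComponent.mem_supp_iff] at huC hu'C hvC
  have htv : t < w s(v, u) := lt_of_not_ge fun h =>
    hvC (huC ▸ ConnectedComponent.sound (Adj.reachable (⟨hu.ne, h⟩ : _ ∧ _)))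
  have hsep : ¬(M.deleteEdges {s(v, u)}).Reachable u u' := fun h => by
    have hvu' : (M.deleteEdges {s(v, u)}).Adj v u' := by simp [hu', Ne.symm hne, hu.ne]
    exact isAcyclic_iff_forall_adj_isBridge.mp hM.1.2.isAcyclic hu
      (hvu'.reachable.trans h.symm)
  exact htv.not_ge (hM.weight_le_of_reachable_thresholdGraph hu
    (ConnectedComponent.exact (huC.trans hu'C.symm)) hsep)

lemma IsMST.ncard_neighborSet_le_of_cover (hM : IsMST ⊤ w M) {v : α} {S : Set (Set α)}
    (hS : S ⊆ laminarFamily ⊤ w) (hcov : M.neighborSet v ⊆ ⋃₀ S) (hv : v ∉ ⋃₀ S) :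
    (M.neighborSet v).ncard ≤ S.ncard := by
  choose! C hCS huC using fun u (hu : u ∈ M.neighborSet v) => hcov hu
  refine Set.ncard_le_ncard_of_injOn C hCS (fun u hu u' hu' h => ?_) (Set.toFinite _)
  exact hM.eq_of_adj_of_mem_laminarFamily hu hu' (hS (hCS u hu))
    (fun hvC => hv ⟨_, hCS u hu, hvC⟩) (huC u hu) (h ▸ huC u' hu')

lemma IsMST.mem_of_weight_eq_of_mem_edges (hM : IsMST ⊤ w M) {v : α}
    (hmax : ∀ M', IsMST ⊤ w M' → (M'.neighborSet v).ncard ≤ (M.neighborSet v).ncard)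
    {u : α} (hvu : ¬M.Adj v u) {p : M.Walk v u} (hp : p.IsPath) {f : Sym2 α}
    (hf : f ∈ p.edges) (hfw : w f = w s(v, u)) : v ∈ f := by
  induction f using Sym2.ind with
  | _ a b =>
    by_contra hvf
    have hsep := hM.1.2.not_reachable_deleteEdges_of_mem_edges hp hf
    have hN := hM.isMST_deleteEdges_sup_edge (p.adj_of_mem_edges hf) hsep hfw.ge
    have hsub : insert u (M.neighborSet v) ⊆
        (M.deleteEdges {s(a, b)} ⊔ edge v u).neighborSet v := by
      rintro z (rfl | hz)
      · exact Or.inr ((edge_adj ..).mpr ⟨Or.inl ⟨rfl, rfl⟩, fun h => hsep (h ▸ .rfl)⟩)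
      · exact Or.inl ((deleteEdges_adj ..).mpr
          ⟨hz, fun h => hvf (Set.mem_singleton_iff.mp h ▸ Sym2.mem_mk_left v z)⟩)
    have := Set.ncard_le_ncard hsub (Set.toFinite _)
    rw [Set.ncard_insert_of_notMem (show u ∉ M.neighborSet v from hvu)] at this
    exact absurd (hmax _ hN) (by omega)

lemma IsMST.exists_adj_weight_eq_reachable (hM : IsMST ⊤ w M) {v : α}
    (hmax : ∀ M', IsMST ⊤ w M' → (M'.neighborSet v).ncard ≤ (M.neighborSet v).ncard)
    {M₀ : SimpleGraph α} (hM₀ : IsMST ⊤ w M₀) {u : α} (hM₀u : M₀.Adj v u) (hu : ¬M.Adj v u) :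
    ∃ b, M.Adj v b ∧ w s(v, b) = w s(v, u) ∧
      (strictThresholdGraph ⊤ w (w s(v, u))).Reachable b u := by
  obtain ⟨p, hp, -⟩ := hM.1.2.existsUnique_path v u
  cases p with
  | nil => exact absurd rfl hM₀u.ne
  | @cons _ b _ hvb q =>
    have hvq : v ∉ q.support := ((Walk.cons_isPath_iff _ _).mp hp).2
    have hqlt : ∀ f ∈ q.edges, w f < w s(v, u) := fun f hf =>
      (hM.weight_le_of_mem_edges hp (by simp [hf])).lt_of_ne fun heq =>
        hvq (Walk.mem_support_of_mem_edges hf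
          (hM.mem_of_weight_eq_of_mem_edges hmax hu hp (by simp [hf]) heq))
    have hbu := q.reachable_strictThresholdGraph hqlt
    refine ⟨b, hvb, (hM.weight_le_of_mem_edges hp (by simp)).antisymm ?_, hbu⟩
    by_contra! hlt
    exact hM₀.not_reachable_strictThresholdGraph hM₀u
      ((Adj.reachable (⟨hvb.ne, hlt⟩ : _ ∧ _)).trans hbu)

lemma IsMST.exists_cover_ncard_le (hM : IsMST ⊤ w M) {v : α}
    (hmax : ∀ M', IsMST ⊤ w M' → (M'.neighborSet v).ncard ≤ (M.neighborSet v).ncard) :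
    ∃ S ⊆ laminarFamily ⊤ w, {u | ∃ M₀, IsMST ⊤ w M₀ ∧ M₀.Adj v u} ⊆ ⋃₀ S ∧
      v ∉ ⋃₀ S ∧ S.ncard ≤ (M.neighborSet v).ncard := by
  set C : α → Set α := fun b =>
    ((strictThresholdGraph ⊤ w (w s(v, b))).connectedComponentMk b).supp
  refine ⟨C '' M.neighborSet v, ?_, ?_, ?_, Set.ncard_image_le (Set.toFinite _)⟩
  · rintro _ ⟨b, -, rfl⟩
    exact connectedComponentMk_strictThresholdGraph_supp_mem_laminarFamily _ _ _ _
  · rintro u ⟨M₀, hM₀, hM₀u⟩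
    by_cases hu : M.Adj v u
    · exact ⟨C u, ⟨u, hu, rfl⟩, rfl⟩
    · obtain ⟨b, hvb, hw, hbu⟩ := hM.exists_adj_weight_eq_reachable hmax hM₀ hM₀u hu
      refine ⟨C b, ⟨b, hvb, rfl⟩, ?_⟩
      change u ∈ ((strictThresholdGraph ⊤ w (w s(v, b))).connectedComponentMk b).supp
      rw [hw, ConnectedComponent.mem_supp_iff]
      exact ConnectedComponent.sound hbu.symm
  · rintro ⟨_, ⟨b, hvb, rfl⟩, hvC⟩
    exact hM.not_reachable_strictThresholdGraph hvb (ConnectedComponent.exact hvC)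

end MST

end SimpleGraph

/-- `δ_max(v)` equals the cardinality of a minimum subcollection of the
laminar family covering the neighborhood of `v` in `g` while avoiding `v`. -/
theorem deltaMax_eq_min_cover_card {V : Type*} (P : PhyloTree V) (v : ↥P.L)
    (Sv : Set (Set ↥P.L))
    (hsub : Sv ⊆ laminarFamily (⊤ : SimpleGraph ↥P.L) P.wG)
    (hcov : {u : ↥P.L | P.mstEdge s(v, u)} ⊆ ⋃₀ Sv)
    (hv : v ∉ ⋃₀ Sv)
    (hmin : ∀ S' ⊆ laminarFamily (⊤ : SimpleGraph ↥P.L) P.wG,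
      {u : ↥P.L | P.mstEdge s(v, u)} ⊆ ⋃₀ S' → v ∉ ⋃₀ S' → Sv.ncard ≤ S'.ncard) :
    P.deltaMax v = Sv.ncard := by
  have := P.finV
  have : Nonempty ↥P.L := P.L_nonempty.to_subtype
  obtain ⟨M, hM, hmax⟩ := exists_isMST_forall_ncard_neighborSet_le P.wG v
  have hdelta : P.deltaMax v = (M.neighborSet v).ncard :=
    IsGreatest.csSup_eq ⟨⟨M, hM, rfl⟩, by rintro _ ⟨M', hM', rfl⟩; exact hmax M' hM'⟩
  obtain ⟨S, hS, hScov, hvS, hScard⟩ := hM.exists_cover_ncard_le hmax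
  rw [hdelta]
  exact le_antisymm (hM.ncard_neighborSet_le_of_cover hsub (fun u hu => hcov ⟨M, hM, hu⟩) hv)
    ((hmin S hS hScov hvS).trans hScard)
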